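/- Let u be a smooth strictly plurisubharmonic function on an open set Ω ⊆ ℂ^n satisfying det(u_{ij̄}) = e^{(n+1)u} on Ω, set A = (u_{ij̄}), B = (u_{ij}), and for each index i define the matrix 𝓑^(i) = ∂_i B − B·(Ā)⁻¹·(∂_i Ā). Then u^{ij̄} ∂_{j̄} 𝓑^(i) = 0 on Ω (summation over i, j). -/

import Mathlib

/-!
Write `S = A⁻¹` and `Γ_i = (∂_i A) S` for the Christoffel symbols of the Kähler metric `A`.
Since `A` is Hermitian, `Ā = Aᵀ` and `𝓑^(i) = ∂_i B - B Γ_iᵀ`. By Jacobi's formula the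
Kähler–Einstein equation `log det A = (n + 1) u` differentiates to `tr Γ_q = (n + 1) u_q`.
Applying `∂_p` to this identity gives `u^{ij̄} (∂_{j̄} ∂_i B - ∂_{j̄} B Γ_iᵀ) = (n + 1) B`;
applying `∂_{j̄}`, and using that `(∂_{j̄} Γ_q) A` is symmetric in `j` and its column index,
gives `u^{ij̄} ∂_{j̄} Γ_i = (n + 1) I`. Hence `u^{ij̄} ∂_{j̄} 𝓑^(i) = (n + 1) B - (n + 1) B = 0`.
Every index symmetry used is an instance of the commutation of mixed Wirtinger derivatives
of the smooth function `u`.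
-/

open Complex Matrix
open scoped ComplexOrder

noncomputable section

/-- Wirtinger derivative `∂/∂z_j` of a complex-valued function on `ℂⁿ`. -/
def wdz {n : ℕ} (f : (Fin n → ℂ) → ℂ) (j : Fin n) (z : Fin n → ℂ) : ℂ :=
  (fderiv ℝ f z (Pi.single j 1) - Complex.I * fderiv ℝ f z (Pi.single j Complex.I)) / 2

/-- Wirtinger derivative `∂/∂z̄_j` of a complex-valued function on `ℂⁿ`. -/
def wdzbar {n : ℕ} (f : (Fin n → ℂ) → ℂ) (j : Fin n) (z : Fin n → ℂ) : ℂ :=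
  (fderiv ℝ f z (Pi.single j 1) + Complex.I * fderiv ℝ f z (Pi.single j Complex.I)) / 2

/-- A real-valued function on `ℂⁿ` viewed as complex-valued. -/
def cplx {n : ℕ} (u : (Fin n → ℂ) → ℝ) : (Fin n → ℂ) → ℂ := fun z => (u z : ℂ)

/-- The complex Hessian `A = (u_{ij̄}) = (∂_i ∂_{j̄} u)`. -/
def hessA {n : ℕ} (u : (Fin n → ℂ) → ℝ) (z : Fin n → ℂ) : Matrix (Fin n) (Fin n) ℂ :=
  Matrix.of fun i j => wdz (wdzbar (cplx u) j) i z

/-- The matrix `B = (u_{ij}) = (∂_i ∂_j u)`. -/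
def hessB {n : ℕ} (u : (Fin n → ℂ) → ℝ) (z : Fin n → ℂ) : Matrix (Fin n) (Fin n) ℂ :=
  Matrix.of fun i j => wdz (wdz (cplx u) j) i z

/-- `u^{ij̄}`, the entries of the inverse of the complex Hessian, with the convention
`∑_j u^{ij̄} u_{kj̄} = δ_{ik}`. -/
def uInv {n : ℕ} (u : (Fin n → ℂ) → ℝ) (z : Fin n → ℂ) (i j : Fin n) : ℂ :=
  (hessA u z)⁻¹ j i

/-- Entrywise Wirtinger derivative `∂_i` of a matrix-valued function. -/
def mwdz {n : ℕ} (F : (Fin n → ℂ) → Matrix (Fin n) (Fin n) ℂ) (i : Fin n) (z : Fin n → ℂ) :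
    Matrix (Fin n) (Fin n) ℂ :=
  Matrix.of fun p q => wdz (fun w => F w p q) i z

/-- Entrywise Wirtinger derivative `∂_{j̄}` of a matrix-valued function. -/
def mwdzbar {n : ℕ} (F : (Fin n → ℂ) → Matrix (Fin n) (Fin n) ℂ) (j : Fin n) (z : Fin n → ℂ) :
    Matrix (Fin n) (Fin n) ℂ :=
  Matrix.of fun p q => wdzbar (fun w => F w p q) j z

/-- Entrywise complex conjugate of a matrix. -/
def mconj {n : ℕ} (M : Matrix (Fin n) (Fin n) ℂ) : Matrix (Fin n) (Fin n) ℂ :=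
  M.map (starRingEnd ℂ)

/-- The real coordinate directions `x_1, …, x_n, y_1, …, y_n` of `ℂⁿ`. -/
def realDir {n : ℕ} : (Fin n ⊕ Fin n) → (Fin n → ℂ)
  | Sum.inl j => Pi.single j 1
  | Sum.inr j => Pi.single j Complex.I

/-- The real Hessian of `u : ℂⁿ → ℝ` in the coordinates `(x_1,…,x_n,y_1,…,y_n)`. -/
def realHess {n : ℕ} (u : (Fin n → ℂ) → ℝ) (z : Fin n → ℂ) :
    Matrix (Fin n ⊕ Fin n) (Fin n ⊕ Fin n) ℝ :=
  Matrix.of fun a b => fderiv ℝ (fun w => fderiv ℝ u w (realDir b)) z (realDir a)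


open scoped ContDiff Topology

section Wirtinger

variable {n : ℕ}

/-- One operator for `∂_j` (`true`) and `∂_{j̄}` (`false`), so that each rule is proved once. -/
def wirt : Bool → ((Fin n → ℂ) → ℂ) → Fin n → (Fin n → ℂ) → ℂ
  | true => wdz
  | false => wdzbar

def mwirt (b : Bool) (F : (Fin n → ℂ) → Matrix (Fin n) (Fin n) ℂ) (j : Fin n)
    (z : Fin n → ℂ) : Matrix (Fin n) (Fin n) ℂ :=
  Matrix.of fun p q => wirt b (fun w => F w p q) j z

variable {Ω : Set (Fin n → ℂ)} {f g : (Fin n → ℂ) → ℂ} {z : Fin n → ℂ} {b c : Bool}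
  {i j : Fin n}

lemma wirt_apply :
    wirt b f j z = (fderiv ℝ f z (Pi.single j 1)
      + (if b then -I else I) * fderiv ℝ f z (Pi.single j I)) / 2 := by
  cases b
  · simp [wirt, wdzbar]
  · simp [wirt, wdz]; ring

lemma wirt_congr (h : f =ᶠ[𝓝 z] g) : wirt b f j z = wirt b g j z := by
  simp only [wirt_apply, h.fderiv_eq]

lemma wirt_const (a : ℂ) : wirt b (fun _ => a) j z = 0 := by
  simp [wirt_apply]

lemma wirt_sub (hf : DifferentiableAt ℝ f z) (hg : DifferentiableAt ℝ g z) :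
    wirt b (fun w => f w - g w) j z = wirt b f j z - wirt b g j z := by
  simp only [wirt_apply, fderiv_fun_sub hf hg, _root_.sub_apply]; ring

lemma wirt_mul (hf : DifferentiableAt ℝ f z) (hg : DifferentiableAt ℝ g z) :
    wirt b (fun w => f w * g w) j z = f z * wirt b g j z + wirt b f j z * g z := by
  simp only [wirt_apply, fderiv_fun_mul hf hg, _root_.add_apply, _root_.smul_apply, smul_eq_mul]
  ring

lemma wirt_const_mul (a : ℂ) (hf : DifferentiableAt ℝ f z) :
    wirt b (fun w => a * f w) j z = a * wirt b f j z := by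
  rw [wirt_mul (differentiableAt_const a) hf, wirt_const]; ring

lemma wirt_sum {ι : Type*} (s : Finset ι) {F : ι → (Fin n → ℂ) → ℂ}
    (hF : ∀ a ∈ s, DifferentiableAt ℝ (F a) z) :
    wirt b (fun w => ∑ a ∈ s, F a w) j z = ∑ a ∈ s, wirt b (F a) j z := by
  simp only [wirt_apply, fderiv_fun_sum hF, _root_.sum_apply, Finset.mul_sum,
    ← Finset.sum_add_distrib, Finset.sum_div]

lemma wirt_prod {ι : Type*} [DecidableEq ι] (s : Finset ι) {F : ι → (Fin n → ℂ) → ℂ}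
    (hF : ∀ a ∈ s, DifferentiableAt ℝ (F a) z) :
    wirt b (fun w => ∏ a ∈ s, F a w) j z
      = ∑ a ∈ s, (∏ a' ∈ s.erase a, F a' z) * wirt b (F a) j z := by
  simp only [wirt_apply, fderiv_finsetProd hF, _root_.sum_apply, _root_.smul_apply, smul_eq_mul,
    Finset.mul_sum, ← Finset.sum_add_distrib, Finset.sum_div]
  exact Finset.sum_congr rfl fun a _ => by ring

lemma wirt_cexp (hf : DifferentiableAt ℝ f z) :
    wirt b (fun w => Complex.exp (f w)) j z = Complex.exp (f z) * wirt b f j z := by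
  simp only [wirt_apply, hf.hasFDerivAt.cexp.fderiv, _root_.smul_apply, smul_eq_mul]; ring

lemma ContDiffOn.differentiableAt_of_isOpen (hf : ContDiffOn ℝ ∞ f Ω) (hΩ : IsOpen Ω)
    (hz : z ∈ Ω) : DifferentiableAt ℝ f z :=
  (hf.differentiableOn (by simp)).differentiableAt (hΩ.mem_nhds hz)

lemma contDiffOn_wirt (hΩ : IsOpen Ω) (hf : ContDiffOn ℝ ∞ f Ω) :
    ContDiffOn ℝ ∞ (wirt b f j) Ω := by
  have hf' := hf.fderiv_of_isOpen hΩ (m := ∞) (by simp)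
  rw [show wirt b f j = _ from funext fun w => wirt_apply]
  exact ((hf'.clm_apply contDiffOn_const).add
    (contDiffOn_const.mul (hf'.clm_apply contDiffOn_const))).div_const 2

lemma fderiv_wirt_apply (hf : ContDiffAt ℝ 2 f z) (d : Fin n → ℂ) :
    fderiv ℝ (wirt c f j) z d = (fderiv ℝ (fderiv ℝ f) z d (Pi.single j 1)
      + (if c then -I else I) * fderiv ℝ (fderiv ℝ f) z d (Pi.single j I)) / 2 := by
  have hF : DifferentiableAt ℝ (fderiv ℝ f) z :=
    (hf.fderiv_right (m := 1) le_rfl).differentiableAt one_ne_zero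
  rw [show wirt c f j = _ from funext fun w => wirt_apply]
  generalize (if c then -I else I) = s
  let L : ((Fin n → ℂ) →L[ℝ] ℂ) →L[ℝ] ℂ := (2 : ℂ)⁻¹ • (ContinuousLinearMap.apply ℝ ℂ
    (Pi.single j 1) + s • ContinuousLinearMap.apply ℝ ℂ (Pi.single j I))
  have hL : (fun w => (fderiv ℝ f w (Pi.single j 1) + s * fderiv ℝ f w (Pi.single j I)) / 2)
      = L ∘ fderiv ℝ f := by
    funext w; simp [L]; ring
  rw [hL, (L.hasFDerivAt.comp z hF.hasFDerivAt).fderiv]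
  simp [L]; ring

lemma wirt_comm (hf : ContDiffAt ℝ 2 f z) :
    wirt b (wirt c f j) i z = wirt c (wirt b f i) j z := by
  have hs := hf.isSymmSndFDerivAt (by simp)
  rw [wirt_apply, wirt_apply (f := wirt b f i), fderiv_wirt_apply hf, fderiv_wirt_apply hf,
    fderiv_wirt_apply hf, fderiv_wirt_apply hf, hs (Pi.single j 1) (Pi.single i 1),
    hs (Pi.single j 1) (Pi.single i I), hs (Pi.single j I) (Pi.single i 1),
    hs (Pi.single j I) (Pi.single i I)]
  ring

def wirtIter : List (Bool × Fin n) → ((Fin n → ℂ) → ℂ) → (Fin n → ℂ) → ℂ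
  | [], f => f
  | x :: l, f => wirt x.1 (wirtIter l f) x.2

lemma contDiffOn_wirtIter (hΩ : IsOpen Ω) (hf : ContDiffOn ℝ ∞ f Ω) (l : List (Bool × Fin n)) :
    ContDiffOn ℝ ∞ (wirtIter l f) Ω := by
  induction l with
  | nil => exact hf
  | cons x l ih => exact contDiffOn_wirt hΩ ih

lemma wirtIter_eqOn_of_perm (hΩ : IsOpen Ω) (hf : ContDiffOn ℝ ∞ f Ω)
    {l₁ l₂ : List (Bool × Fin n)} (h : l₁.Perm l₂) :
    Set.EqOn (wirtIter l₁ f) (wirtIter l₂ f) Ω := by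
  induction h with
  | nil => exact Set.eqOn_refl _ _
  | cons x _ ih => exact fun z hz => wirt_congr (ih.eventuallyEq_of_mem (hΩ.mem_nhds hz))
  | swap x y l =>
    exact fun z hz => wirt_comm (((contDiffOn_wirtIter hΩ hf l).contDiffAt
      (hΩ.mem_nhds hz)).of_le (WithTop.coe_le_coe.2 le_top))
  | trans _ _ ih₁ ih₂ => exact ih₁.trans ih₂

/-- Phrased with multisets so that concrete instances are closed by `abel`. -/
lemma wirtIter_eq_of_perm (hΩ : IsOpen Ω) (hf : ContDiffOn ℝ ∞ f Ω) (hz : z ∈ Ω)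
    (l₁ l₂ : List (Bool × Fin n)) (h : (l₁ : Multiset (Bool × Fin n)) = l₂) :
    wirtIter l₁ f z = wirtIter l₂ f z :=
  wirtIter_eqOn_of_perm hΩ hf (Multiset.coe_eq_coe.1 h) hz

variable {F G : (Fin n → ℂ) → Matrix (Fin n) (Fin n) ℂ}

lemma contDiffOn_mwirt_apply (hΩ : IsOpen Ω) (hF : ∀ p q, ContDiffOn ℝ ∞ (fun w => F w p q) Ω)
    (p q : Fin n) : ContDiffOn ℝ ∞ (fun w => mwirt b F j w p q) Ω :=
  contDiffOn_wirt hΩ (hF p q)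

lemma contDiffOn_mul_apply {k : WithTop ℕ∞} (hF : ∀ p q, ContDiffOn ℝ k (fun w => F w p q) Ω)
    (hG : ∀ p q, ContDiffOn ℝ k (fun w => G w p q) Ω) (p q : Fin n) :
    ContDiffOn ℝ k (fun w => (F w * G w) p q) Ω := by
  simp only [Matrix.mul_apply]
  exact ContDiffOn.sum fun r _ => (hF p r).mul (hG r q)

lemma contDiffOn_det {k : WithTop ℕ∞} (hF : ∀ p q, ContDiffOn ℝ k (fun w => F w p q) Ω) :
    ContDiffOn ℝ k (fun w => (F w).det) Ω := by
  simp only [Matrix.det_apply']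
  exact ContDiffOn.sum fun σ _ => contDiffOn_const.mul (contDiffOn_prod fun k _ => hF _ _)

lemma contDiffOn_inv_apply {k : WithTop ℕ∞} (hF : ∀ p q, ContDiffOn ℝ k (fun w => F w p q) Ω)
    (hdet : ∀ w ∈ Ω, (F w).det ≠ 0) (p q : Fin n) :
    ContDiffOn ℝ k (fun w => (F w)⁻¹ p q) Ω := by
  classical
  simp only [Matrix.inv_def, Matrix.smul_apply, Ring.inverse_eq_inv', smul_eq_mul,
    Matrix.adjugate_apply]
  refine ((contDiffOn_det hF).inv hdet).mul (contDiffOn_det fun r s => ?_)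
  by_cases h : r = q
  · simp [h, contDiffOn_const]
  · simpa [Matrix.updateRow_ne h] using hF r s

lemma mwirt_congr (h : F =ᶠ[𝓝 z] G) : mwirt b F j z = mwirt b G j z := by
  ext p q; exact wirt_congr (h.mono fun w hw => congrFun (congrFun hw p) q)

lemma mwirt_const (M : Matrix (Fin n) (Fin n) ℂ) : mwirt b (fun _ => M) j z = 0 := by
  ext; exact wirt_const _

lemma mwirt_transpose : mwirt b (fun w => (F w)ᵀ) j z = (mwirt b F j z)ᵀ := rfl

lemma mwirt_sub (hF : ∀ p q, DifferentiableAt ℝ (fun w => F w p q) z)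
    (hG : ∀ p q, DifferentiableAt ℝ (fun w => G w p q) z) :
    mwirt b (fun w => F w - G w) j z = mwirt b F j z - mwirt b G j z := by
  ext p q; exact wirt_sub (hF p q) (hG p q)

lemma mwirt_mul (hF : ∀ p q, DifferentiableAt ℝ (fun w => F w p q) z)
    (hG : ∀ p q, DifferentiableAt ℝ (fun w => G w p q) z) :
    mwirt b (fun w => F w * G w) j z = mwirt b F j z * G z + F z * mwirt b G j z := by
  ext p q
  simp only [mwirt, Matrix.of_apply, Matrix.mul_apply, Matrix.add_apply]
  rw [wirt_sum _ fun k _ => (hF p k).fun_mul (hG k q), ← Finset.sum_add_distrib]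
  exact Finset.sum_congr rfl fun k _ => by rw [wirt_mul (hF p k) (hG k q)]; ring

lemma mwirt_inv (hF : ∀ p q, DifferentiableAt ℝ (fun w => F w p q) z)
    (hF' : ∀ p q, DifferentiableAt ℝ (fun w => (F w)⁻¹ p q) z)
    (hdet : ∀ᶠ w in 𝓝 z, IsUnit (F w).det) :
    mwirt b (fun w => (F w)⁻¹) j z = -((F z)⁻¹ * mwirt b F j z * (F z)⁻¹) := by
  have h0 : mwirt b (fun w => (F w)⁻¹) j z * F z + (F z)⁻¹ * mwirt b F j z = 0 := by
    rw [← mwirt_mul hF' hF, mwirt_congr (hdet.mono fun w hw => Matrix.nonsing_inv_mul _ hw),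
      mwirt_const]
  calc mwirt b (fun w => (F w)⁻¹) j z
      = (mwirt b (fun w => (F w)⁻¹) j z * F z + (F z)⁻¹ * mwirt b F j z) * (F z)⁻¹
          - (F z)⁻¹ * mwirt b F j z * (F z)⁻¹ := by
        rw [add_mul, Matrix.mul_assoc, Matrix.mul_nonsing_inv _ hdet.self_of_nhds,
          Matrix.mul_one, add_sub_cancel_right]
    _ = _ := by rw [h0, Matrix.zero_mul, zero_sub]

lemma wirt_trace (hF : ∀ p q, DifferentiableAt ℝ (fun w => F w p q) z) :
    wirt b (fun w => (F w).trace) j z = (mwirt b F j z).trace := by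
  simp only [Matrix.trace, Matrix.diag]
  exact wirt_sum _ fun p _ => hF p p

lemma wirt_det (hF : ∀ p q, DifferentiableAt ℝ (fun w => F w p q) z) :
    wirt b (fun w => (F w).det) j z = ((F z).adjugate * mwirt b F j z).trace := by
  classical
  have hprod (σ : Equiv.Perm (Fin n)) : DifferentiableAt ℝ (fun w => ∏ k, F w (σ k) k) z :=
    (HasFDerivAt.finsetProd fun k _ => (hF (σ k) k).hasFDerivAt).differentiableAt
  -- By Cramer's rule, the `k`-th diagonal entry is `det F` with column `k` differentiated.
  have hcol (k : Fin n) : ((F z).adjugate * mwirt b F j z) k k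
      = ∑ σ : Equiv.Perm (Fin n), (Equiv.Perm.sign σ : ℂ)
          * ((∏ l ∈ Finset.univ.erase k, F z (σ l) l) * mwirt b F j z (σ k) k) := by
    rw [Matrix.mul_apply, ← dotProduct, ← Matrix.mulVec, ← Matrix.cramer_eq_adjugate_mulVec,
      Matrix.cramer_apply, Matrix.det_apply']
    refine Finset.sum_congr rfl fun σ _ => ?_
    rw [← Finset.mul_prod_erase _ _ (Finset.mem_univ k), Matrix.updateCol_self,
      Finset.prod_congr rfl fun l hl => Matrix.updateCol_ne (Finset.ne_of_mem_erase hl)]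
    ring
  simp only [Matrix.det_apply', Matrix.trace, Matrix.diag, hcol]
  rw [wirt_sum _ fun σ _ => (hprod σ).const_mul _, Finset.sum_comm]
  refine Finset.sum_congr rfl fun σ _ => ?_
  rw [wirt_const_mul _ (hprod σ), wirt_prod _ fun k _ => hF (σ k) k, Finset.mul_sum]
  rfl

end Wirtinger

section KahlerEinstein

variable {n : ℕ} {Ω : Set (Fin n → ℂ)} {u : (Fin n → ℂ) → ℝ} {z : Fin n → ℂ}

def KahlerEinsteinOn (Ω : Set (Fin n → ℂ)) (u : (Fin n → ℂ) → ℝ) : Prop :=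
  ∀ z ∈ Ω, (hessA u z).det = (Real.exp ((n + 1) * u z) : ℂ)

/-- Entry `(q, l)` is the Christoffel symbol `Γ^l_{iq} = u^{lk̄} u_{qk̄i}` of the metric `A`. -/
def christoffel (u : (Fin n → ℂ) → ℝ) (i : Fin n) (z : Fin n → ℂ) : Matrix (Fin n) (Fin n) ℂ :=
  mwirt true (hessA u) i z * (hessA u z)⁻¹

def scrB (u : (Fin n → ℂ) → ℝ) (i : Fin n) (z : Fin n → ℂ) : Matrix (Fin n) (Fin n) ℂ :=
  mwdz (hessB u) i z - hessB u z * (mconj (hessA u z))⁻¹ * mwdz (fun w => mconj (hessA u w)) i z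

lemma contDiffOn_cplx (hu : ContDiffOn ℝ ∞ u Ω) : ContDiffOn ℝ ∞ (cplx u) Ω :=
  Complex.ofRealCLM.contDiff.comp_contDiffOn hu

lemma contDiffOn_hessA_apply (hΩ : IsOpen Ω) (hu : ContDiffOn ℝ ∞ u Ω) (p q : Fin n) :
    ContDiffOn ℝ ∞ (fun w => hessA u w p q) Ω :=
  contDiffOn_wirtIter hΩ (contDiffOn_cplx hu) [(true, p), (false, q)]

lemma contDiffOn_hessB_apply (hΩ : IsOpen Ω) (hu : ContDiffOn ℝ ∞ u Ω) (p q : Fin n) :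
    ContDiffOn ℝ ∞ (fun w => hessB u w p q) Ω :=
  contDiffOn_wirtIter hΩ (contDiffOn_cplx hu) [(true, p), (true, q)]

lemma hessA_det_ne_zero (hKE : KahlerEinsteinOn Ω u) (hz : z ∈ Ω) : (hessA u z).det ≠ 0 := by
  rw [hKE z hz]; exact_mod_cast (Real.exp_pos _).ne'

lemma contDiffOn_hessA_inv_apply (hΩ : IsOpen Ω) (hu : ContDiffOn ℝ ∞ u Ω)
    (hKE : KahlerEinsteinOn Ω u) (p q : Fin n) :
    ContDiffOn ℝ ∞ (fun w => (hessA u w)⁻¹ p q) Ω :=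
  contDiffOn_inv_apply (contDiffOn_hessA_apply hΩ hu) (fun _ hw => hessA_det_ne_zero hKE hw) p q

lemma contDiffOn_christoffel_apply (hΩ : IsOpen Ω) (hu : ContDiffOn ℝ ∞ u Ω)
    (hKE : KahlerEinsteinOn Ω u) (i p q : Fin n) :
    ContDiffOn ℝ ∞ (fun w => christoffel u i w p q) Ω :=
  contDiffOn_mul_apply (contDiffOn_mwirt_apply hΩ (contDiffOn_hessA_apply hΩ hu))
    (contDiffOn_hessA_inv_apply hΩ hu hKE) p q

lemma wirt_false_wirt_true_cplx (hΩ : IsOpen Ω) (hu : ContDiffOn ℝ ∞ u Ω) (hz : z ∈ Ω)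
    (q m : Fin n) : wirt false (wirt true (cplx u) q) m z = hessA u z q m :=
  wirtIter_eq_of_perm hΩ (contDiffOn_cplx hu) hz [(false, m), (true, q)] [(true, q), (false, m)]
    (by simp only [← Multiset.cons_coe, ← Multiset.singleton_add]; abel)

lemma mwirt_true_hessA_apply_comm (hΩ : IsOpen Ω) (hu : ContDiffOn ℝ ∞ u Ω) (hz : z ∈ Ω)
    (i q k : Fin n) : mwirt true (hessA u) i z q k = mwirt true (hessA u) q z i k :=
  wirtIter_eq_of_perm hΩ (contDiffOn_cplx hu) hz [(true, i), (true, q), (false, k)]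
    [(true, q), (true, i), (false, k)]
    (by simp only [← Multiset.cons_coe, ← Multiset.singleton_add]; abel)

lemma mwirt_false_hessA_apply_comm (hΩ : IsOpen Ω) (hu : ContDiffOn ℝ ∞ u Ω) (hz : z ∈ Ω)
    (j l m : Fin n) : mwirt false (hessA u) j z l m = mwirt false (hessA u) m z l j :=
  wirtIter_eq_of_perm hΩ (contDiffOn_cplx hu) hz [(false, j), (true, l), (false, m)]
    [(false, m), (true, l), (false, j)]
    (by simp only [← Multiset.cons_coe, ← Multiset.singleton_add]; abel)

lemma mwirt_false_hessB_apply (hΩ : IsOpen Ω) (hu : ContDiffOn ℝ ∞ u Ω) (hz : z ∈ Ω)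
    (j p l : Fin n) : mwirt false (hessB u) j z p l = mwirt true (hessA u) p z l j :=
  wirtIter_eq_of_perm hΩ (contDiffOn_cplx hu) hz [(false, j), (true, p), (true, l)]
    [(true, p), (true, l), (false, j)]
    (by simp only [← Multiset.cons_coe, ← Multiset.singleton_add]; abel)

lemma mwirt_false_mwirt_true_hessA_apply_comm (hΩ : IsOpen Ω) (hu : ContDiffOn ℝ ∞ u Ω)
    (hz : z ∈ Ω) (q i j m : Fin n) :
    mwirt false (mwirt true (hessA u) q) j z i m = mwirt false (mwirt true (hessA u) q) m z i j :=
  wirtIter_eq_of_perm hΩ (contDiffOn_cplx hu) hz [(false, j), (true, q), (true, i), (false, m)]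
    [(false, m), (true, q), (true, i), (false, j)]
    (by simp only [← Multiset.cons_coe, ← Multiset.singleton_add]; abel)

lemma mwirt_false_mwirt_true_hessB_apply (hΩ : IsOpen Ω) (hu : ContDiffOn ℝ ∞ u Ω)
    (hz : z ∈ Ω) (i j p q : Fin n) :
    mwirt false (mwirt true (hessB u) i) j z p q = mwirt true (mwirt true (hessA u) q) p z i j :=
  wirtIter_eq_of_perm hΩ (contDiffOn_cplx hu) hz [(false, j), (true, i), (true, p), (true, q)]
    [(true, p), (true, q), (true, i), (false, j)]
    (by simp only [← Multiset.cons_coe, ← Multiset.singleton_add]; abel)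

lemma christoffel_apply_comm (hΩ : IsOpen Ω) (hu : ContDiffOn ℝ ∞ u Ω) (hz : z ∈ Ω)
    (i q l : Fin n) : christoffel u i z q l = christoffel u q z i l := by
  simp only [christoffel, Matrix.mul_apply, mwirt_true_hessA_apply_comm hΩ hu hz i q]

lemma mwirt_christoffel_apply_comm (hΩ : IsOpen Ω) (hu : ContDiffOn ℝ ∞ u Ω) (hz : z ∈ Ω)
    (b : Bool) (j i q l : Fin n) :
    mwirt b (christoffel u i) j z q l = mwirt b (christoffel u q) j z i l :=
  wirt_congr (Filter.eventually_of_mem (hΩ.mem_nhds hz) fun _ hw =>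
    christoffel_apply_comm hΩ hu hw i q l)

lemma trace_christoffel (hΩ : IsOpen Ω) (hu : ContDiffOn ℝ ∞ u Ω) (hKE : KahlerEinsteinOn Ω u)
    (hz : z ∈ Ω) (q : Fin n) :
    (christoffel u q z).trace = (n + 1) * wirt true (cplx u) q z := by
  have hU := (contDiffOn_cplx hu).differentiableAt_of_isOpen hΩ hz
  have hdet : (fun w => (hessA u w).det) =ᶠ[𝓝 z] fun w => Complex.exp ((n + 1) * cplx u w) :=
    Filter.eventually_of_mem (hΩ.mem_nhds hz) fun w hw => by
      show (hessA u w).det = _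
      rw [hKE w hw]; simp [cplx]
  have hjacobi := wirt_det (b := true) (j := q) fun p q =>
    (contDiffOn_hessA_apply hΩ hu p q).differentiableAt_of_isOpen hΩ hz
  have hdetz : (hessA u z).det = Complex.exp ((n + 1) * cplx u z) := hdet.self_of_nhds
  have hadj : (hessA u z).adjugate = (hessA u z).det • (hessA u z)⁻¹ := by
    rw [Matrix.inv_def, smul_smul, Ring.inverse_eq_inv',
      mul_inv_cancel₀ (hessA_det_ne_zero hKE hz), one_smul]
  rw [wirt_congr hdet, wirt_cexp (hU.const_mul _), wirt_const_mul _ hU, ← hdetz, hadj,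
    Matrix.smul_mul, Matrix.trace_smul, smul_eq_mul, Matrix.trace_mul_comm] at hjacobi
  exact (mul_left_cancel₀ (hessA_det_ne_zero hKE hz) hjacobi).symm

lemma mwirt_christoffel (hΩ : IsOpen Ω) (hu : ContDiffOn ℝ ∞ u Ω) (hKE : KahlerEinsteinOn Ω u)
    (hz : z ∈ Ω) (b : Bool) (j q : Fin n) :
    mwirt b (christoffel u q) j z = (mwirt b (mwirt true (hessA u) q) j z
      - christoffel u q z * mwirt b (hessA u) j z) * (hessA u z)⁻¹ := by
  have dA p q := (contDiffOn_hessA_apply hΩ hu p q).differentiableAt_of_isOpen hΩ hz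
  have dS p q := (contDiffOn_hessA_inv_apply hΩ hu hKE p q).differentiableAt_of_isOpen hΩ hz
  have dA' p' q' := (contDiffOn_mwirt_apply (b := true) (j := q) hΩ
    (contDiffOn_hessA_apply hΩ hu) p' q').differentiableAt_of_isOpen hΩ hz
  have hunit : ∀ᶠ w in 𝓝 z, IsUnit (hessA u w).det :=
    Filter.eventually_of_mem (hΩ.mem_nhds hz) fun _ hw => (hessA_det_ne_zero hKE hw).isUnit
  show mwirt b (fun w => mwirt true (hessA u) q w * (hessA u w)⁻¹) j z = _
  rw [mwirt_mul dA' dS, mwirt_inv dA dS hunit]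
  simp only [christoffel]
  noncomm_ring

lemma trace_mwirt_christoffel (hΩ : IsOpen Ω) (hu : ContDiffOn ℝ ∞ u Ω)
    (hKE : KahlerEinsteinOn Ω u) (hz : z ∈ Ω) (b : Bool) (j q : Fin n) :
    (mwirt b (christoffel u q) j z).trace = (n + 1) * wirt b (wirt true (cplx u) q) j z := by
  rw [← wirt_trace (F := christoffel u q) fun p q' =>
      (contDiffOn_christoffel_apply hΩ hu hKE q p q').differentiableAt_of_isOpen hΩ hz,
    wirt_congr (Filter.eventually_of_mem (hΩ.mem_nhds hz) fun _ hw =>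
      trace_christoffel hΩ hu hKE hw q),
    wirt_const_mul _ ((contDiffOn_wirt hΩ (contDiffOn_cplx hu)).differentiableAt_of_isOpen hΩ hz)]

lemma mwirt_christoffel_mul_hessA (hΩ : IsOpen Ω) (hu : ContDiffOn ℝ ∞ u Ω)
    (hKE : KahlerEinsteinOn Ω u) (hz : z ∈ Ω) (b : Bool) (j q : Fin n) :
    mwirt b (christoffel u q) j z * hessA u z
      = mwirt b (mwirt true (hessA u) q) j z - christoffel u q z * mwirt b (hessA u) j z := by
  rw [mwirt_christoffel hΩ hu hKE hz, Matrix.mul_assoc,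
    Matrix.nonsing_inv_mul _ (hessA_det_ne_zero hKE hz).isUnit, Matrix.mul_one]

lemma mwirt_false_christoffel_mul_hessA_apply_comm (hΩ : IsOpen Ω) (hu : ContDiffOn ℝ ∞ u Ω)
    (hKE : KahlerEinsteinOn Ω u) (hz : z ∈ Ω) (q i j m : Fin n) :
    (mwirt false (christoffel u q) j z * hessA u z) i m
      = (mwirt false (christoffel u q) m z * hessA u z) i j := by
  rw [mwirt_christoffel_mul_hessA hΩ hu hKE hz, mwirt_christoffel_mul_hessA hΩ hu hKE hz]
  simp only [Matrix.sub_apply, Matrix.mul_apply,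
    mwirt_false_mwirt_true_hessA_apply_comm hΩ hu hz q i j m,
    fun l => mwirt_false_hessA_apply_comm hΩ hu hz j l m]

/-- `∂_p` of `tr Γ_q = (n + 1) u_q`. -/
lemma hessB_contraction (hΩ : IsOpen Ω) (hu : ContDiffOn ℝ ∞ u Ω) (hKE : KahlerEinsteinOn Ω u)
    (hz : z ∈ Ω) :
    ∑ i, ∑ j, uInv u z i j • (mwirt false (mwirt true (hessB u) i) j z
      - mwirt false (hessB u) j z * (christoffel u i z)ᵀ) = ((n : ℂ) + 1) • hessB u z := by
  ext p q
  have h : (mwirt true (christoffel u q) p z).trace = (n + 1) * hessB u z p q :=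
    trace_mwirt_christoffel hΩ hu hKE hz true p q
  rw [mwirt_christoffel hΩ hu hKE hz] at h
  simp only [Matrix.trace, Matrix.diag, Matrix.mul_apply, Matrix.sub_apply] at h
  simp only [Matrix.sum_apply, Matrix.smul_apply, Matrix.sub_apply, Matrix.mul_apply,
    Matrix.transpose_apply, smul_eq_mul, uInv, ← h]
  refine Finset.sum_congr rfl fun i _ => Finset.sum_congr rfl fun j _ => ?_
  rw [mwirt_false_mwirt_true_hessB_apply hΩ hu hz, mul_comm]
  congr 2
  exact Finset.sum_congr rfl fun l _ => by
    rw [mwirt_false_hessB_apply hΩ hu hz, christoffel_apply_comm hΩ hu hz, mul_comm]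

/-- `∂_{j̄}` of `tr Γ_q = (n + 1) u_q`: the Kähler–Einstein condition `Ric = -(n + 1) A`. -/
lemma ricci_contraction (hΩ : IsOpen Ω) (hu : ContDiffOn ℝ ∞ u Ω) (hKE : KahlerEinsteinOn Ω u)
    (hz : z ∈ Ω) :
    ∑ i, ∑ j, uInv u z i j • mwirt false (christoffel u i) j z
      = ((n : ℂ) + 1) • (1 : Matrix (Fin n) (Fin n) ℂ) := by
  ext q l
  have hA := (hessA_det_ne_zero hKE hz).isUnit
  set S := (hessA u z)⁻¹ with hS
  set R : Fin n → Matrix (Fin n) (Fin n) ℂ :=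
    fun m => mwirt false (christoffel u q) m z * hessA u z with hR
  have htr m : (R m * S).trace = (n + 1) * hessA u z q m := by
    rw [hR, Matrix.mul_assoc, Matrix.mul_nonsing_inv _ hA, Matrix.mul_one,
      trace_mwirt_christoffel hΩ hu hKE hz, wirt_false_wirt_true_cplx hΩ hu hz]
  have hRS j i : mwirt false (christoffel u q) j z i l = ∑ m, R j i m * S m l := by
    rw [← Matrix.mul_apply, hR, Matrix.mul_assoc, Matrix.mul_nonsing_inv _ hA, Matrix.mul_one]
  calc (∑ i, ∑ j, uInv u z i j • mwirt false (christoffel u i) j z) q l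
      = ∑ i, ∑ j, S j i * ∑ m, R m i j * S m l := by
        simp only [Matrix.sum_apply, Matrix.smul_apply, smul_eq_mul, uInv]
        refine Finset.sum_congr rfl fun i _ => Finset.sum_congr rfl fun j _ => ?_
        rw [mwirt_christoffel_apply_comm hΩ hu hz, hRS]
        simp only [hR, mwirt_false_christoffel_mul_hessA_apply_comm hΩ hu hKE hz q i j, ← hS]
    _ = ∑ m, (R m * S).trace * S m l := by
        simp only [Matrix.trace, Matrix.diag, Matrix.mul_apply, Finset.mul_sum, Finset.sum_mul]
        conv_rhs => rw [Finset.sum_comm]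
        refine Finset.sum_congr rfl fun i _ => ?_
        conv_rhs => rw [Finset.sum_comm]
        exact Finset.sum_congr rfl fun m _ => Finset.sum_congr rfl fun j _ => by ring
    _ = (n + 1) * (hessA u z * S) q l := by
        simp only [htr, Matrix.mul_apply, Finset.mul_sum, mul_assoc]
    _ = _ := by rw [Matrix.mul_nonsing_inv _ hA, Matrix.smul_apply, smul_eq_mul]

lemma mconj_eq_transpose {M : Matrix (Fin n) (Fin n) ℂ} (hM : M.IsHermitian) : mconj M = Mᵀ := by
  ext i j; exact hM.apply j i

lemma scrB_eq (hΩ : IsOpen Ω) (hpsh : ∀ z ∈ Ω, (hessA u z).PosDef) (hz : z ∈ Ω) (i : Fin n) :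
    scrB u i z = mwirt true (hessB u) i z - hessB u z * (christoffel u i z)ᵀ := by
  have hA : mwdz (fun w => mconj (hessA u w)) i z = (mwirt true (hessA u) i z)ᵀ :=
    (mwirt_congr (b := true) (j := i) (Filter.eventually_of_mem (hΩ.mem_nhds hz) fun w hw =>
      mconj_eq_transpose (hpsh w hw).1)).trans mwirt_transpose
  rw [scrB, hA, mconj_eq_transpose (hpsh z hz).1, ← Matrix.transpose_nonsing_inv,
    Matrix.mul_assoc, ← Matrix.transpose_mul, christoffel]
  rfl

lemma mwirt_false_scrB (hΩ : IsOpen Ω) (hu : ContDiffOn ℝ ∞ u Ω)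
    (hpsh : ∀ z ∈ Ω, (hessA u z).PosDef) (hKE : KahlerEinsteinOn Ω u) (hz : z ∈ Ω)
    (i j : Fin n) :
    mwirt false (scrB u i) j z = mwirt false (mwirt true (hessB u) i) j z
      - mwirt false (hessB u) j z * (christoffel u i z)ᵀ
      - hessB u z * (mwirt false (christoffel u i) j z)ᵀ := by
  have dB p q := (contDiffOn_hessB_apply hΩ hu p q).differentiableAt_of_isOpen hΩ hz
  have dB' p q := (contDiffOn_mwirt_apply (b := true) (j := i) hΩ
    (contDiffOn_hessB_apply hΩ hu) p q).differentiableAt_of_isOpen hΩ hz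
  have dΓ p q := (contDiffOn_christoffel_apply hΩ hu hKE i q p).differentiableAt_of_isOpen hΩ hz
  have dBΓ p q : DifferentiableAt ℝ (fun w => (hessB u w * (christoffel u i w)ᵀ) p q) z :=
    (contDiffOn_mul_apply (contDiffOn_hessB_apply hΩ hu)
      (fun p q => contDiffOn_christoffel_apply hΩ hu hKE i q p) p q).differentiableAt_of_isOpen
        hΩ hz
  rw [mwirt_congr (Filter.eventually_of_mem (hΩ.mem_nhds hz) fun _ hw => scrB_eq hΩ hpsh hw i),
    mwirt_sub dB' dBΓ, mwirt_mul (G := fun w => (christoffel u i w)ᵀ) dB dΓ, mwirt_transpose,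
    sub_add_eq_sub_sub]

end KahlerEinstein

theorem trace_dbar_scrB_eq_zero (n : ℕ) (Ω : Set (Fin n → ℂ)) (hΩ : IsOpen Ω)
    (u : (Fin n → ℂ) → ℝ) (hu : ContDiffOn ℝ (⊤ : ℕ∞) u Ω)
    (hpsh : ∀ z ∈ Ω, (hessA u z).PosDef)
    (hKE : ∀ z ∈ Ω, (hessA u z).det = (Real.exp ((n + 1) * u z) : ℂ)) :
    ∀ z ∈ Ω,
      ∑ i, ∑ j, uInv u z i j •
          mwdzbar (fun w =>
            mwdz (hessB u) i w -
              hessB u w * (mconj (hessA u w))⁻¹ *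
                mwdz (fun w' => mconj (hessA u w')) i w) j z
        = 0 := by
  intro z hz
  change ∑ i, ∑ j, uInv u z i j • mwirt false (scrB u i) j z = 0
  calc
    _ = ∑ i, ∑ j, uInv u z i j • (mwirt false (mwirt true (hessB u) i) j z
            - mwirt false (hessB u) j z * (christoffel u i z)ᵀ)
          - hessB u z * (∑ i, ∑ j, uInv u z i j • mwirt false (christoffel u i) j z)ᵀ := by
      simp only [mwirt_false_scrB hΩ hu hpsh hKE hz, smul_sub, Finset.sum_sub_distrib,
        Matrix.transpose_sum, Matrix.transpose_smul, Finset.mul_sum, Matrix.mul_smul]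
    _ = 0 := by
      rw [hessB_contraction hΩ hu hKE hz, ricci_contraction hΩ hu hKE hz, Matrix.transpose_smul,
        Matrix.transpose_one, Matrix.mul_smul, Matrix.mul_one, sub_self]

end
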